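/- A finite 3-group G is a cut group if and only if every element x ∈ G satisfies x² ∼ x⁻¹ (equivalently x^{-2} ∼ x). -/
import Mathlib

/-- A finite group is a *cut group* (inverse semi-rational) if for every element `x`
and every integer `j` coprime to the order of `x`, `x ^ j` is conjugate to `x` or to `x⁻¹`. -/
def IsCutGroup (G : Type*) [Group G] : Prop :=
  ∀ x : G, ∀ j : ℤ, Int.gcd j (orderOf x) = 1 →
    IsConj (x ^ j) x ∨ IsConj (x ^ j) x⁻¹

/- arithmetic lemmas -/

private lemma lemB : ∀ k : ℕ, ∃ u : ℤ, (4:ℤ)^(3^k) = 1 + 3^(k+1) * u ∧ ¬ (3:ℤ) ∣ u := by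
  intro k
  induction k with
  | zero => exact ⟨1, by norm_num, by norm_num⟩
  | succ k ih =>
    obtain ⟨u, hu, h3u⟩ := ih
    refine ⟨u + 3^(k+1)*u^2 + 3^(2*k+1)*u^3, ?_, ?_⟩
    · have h : (4:ℤ)^(3^(k+1)) = ((4:ℤ)^(3^k))^3 := by
        rw [pow_succ, pow_mul]
      rw [h, hu]; ring
    · intro h
      apply h3u
      have h1 : (3:ℤ) ∣ 3^(k+1)*u^2 + 3^(2*k+1)*u^3 :=
        dvd_add (Dvd.dvd.mul_right (dvd_pow_self 3 (Nat.succ_ne_zero k)) _)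
          (Dvd.dvd.mul_right (dvd_pow_self 3 (by omega)) _)
      have := dvd_sub h h1
      simpa using this

private lemma pow_one_add (c : ℤ) : ∀ s : ℕ, ∃ C : ℤ, (1+c)^s = 1 + s*c + c^2*C := by
  intro s
  induction s with
  | zero => exact ⟨0, by norm_num⟩
  | succ s ih =>
    obtain ⟨C, hC⟩ := ih
    exact ⟨C + s + c*C, by rw [pow_succ, hC]; push_cast; ring⟩

private lemma exists_s (t v : ℤ) (hv : ¬ (3:ℤ) ∣ v) : ∃ (s : ℕ) (t' : ℤ), t - s*v = 3*t' := by
  have h1 : v % 3 = 1 ∨ v % 3 = 2 := by omega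
  have h2 : t % 3 = 0 ∨ t % 3 = 1 ∨ t % 3 = 2 := by omega
  have key : ∃ s : ℕ, (3:ℤ) ∣ t - s*v := by
    rcases h1 with h|h <;> rcases h2 with h'|h'|h'
    · exact ⟨0, by push_cast; omega⟩
    · exact ⟨1, by push_cast; omega⟩
    · exact ⟨2, by push_cast; omega⟩
    · exact ⟨0, by push_cast; omega⟩
    · exact ⟨2, by push_cast; omega⟩
    · exact ⟨1, by push_cast; omega⟩
  obtain ⟨s, t', h⟩ := key
  exact ⟨s, t', h⟩

private lemma lemA : ∀ k : ℕ, ∀ j : ℤ, ¬ (3:ℤ) ∣ j →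
    ∃ (m : ℕ) (ε : ℤ), (ε = 1 ∨ ε = -1) ∧ (3:ℤ)^(k+1) ∣ j - ε * 2^m := by
  intro k
  induction k with
  | zero =>
    intro j hj
    have h : j % 3 = 1 ∨ j % 3 = 2 := by omega
    rcases h with h|h
    · exact ⟨0, 1, Or.inl rfl, by simpa using (by omega : (3:ℤ) ∣ j - 1)⟩
    · exact ⟨0, -1, Or.inr rfl, by simpa using (by omega : (3:ℤ) ∣ j + 1)⟩
  | succ k ih =>
    intro j hj
    obtain ⟨m, ε, hε, hd⟩ := ih j hj
    obtain ⟨t, ht⟩ := hd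
    obtain ⟨u, hu, h3u⟩ := lemB k
    have hprime3 : Prime (3:ℤ) := Int.prime_three
    have hv3 : ¬ (3:ℤ) ∣ ε * 2^m * u := by
      intro h
      rcases hprime3.dvd_mul.mp h with h|h
      · rcases hprime3.dvd_mul.mp h with h|h
        · rcases hε with rfl|rfl
          · norm_num at h
          · rw [dvd_neg] at h; norm_num at h
        · have := hprime3.dvd_of_dvd_pow h; norm_num at this
      · exact h3u h
    obtain ⟨s, t', hs⟩ := exists_s t (ε * 2^m * u) hv3
    refine ⟨m + 2*3^k*s, ε, hε, ?_⟩
    have h2 : (2:ℤ)^(m + 2*3^k*s) = 2^m * ((4:ℤ)^(3^k))^s := by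
      rw [pow_add, pow_mul, pow_mul]; norm_num
    obtain ⟨C, hC⟩ := pow_one_add (3^(k+1)*u) s
    rw [h2, hu, hC]
    exact ⟨t' - 3^k * (ε * 2^m * u^2 * C), by linear_combination ht + (3:ℤ)^(k+1)*hs⟩

private lemma neg_one_pow_dvd : ∀ d : ℕ, (3:ℤ) ∣ 2^d - (-1)^d := by
  intro d
  induction d with
  | zero => simp
  | succ d ih =>
    obtain ⟨c, hc⟩ := ih
    exact ⟨(-1)^d + 2*c, by linear_combination 2*hc⟩

private lemma lemC (k : ℕ) : ∃ m : ℕ, (3:ℤ)^(k+1) ∣ 2^m + 1 := by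
  set n : ℕ := 3^(k+1) with hn
  haveI : NeZero n := ⟨by positivity⟩
  have hcop : Nat.Coprime 2 n := Nat.Coprime.pow_right _ (by decide)
  set u : (ZMod n)ˣ := ZMod.unitOfCoprime 2 hcop with hudef
  have hu : (u : ZMod n) = 2 := by
    rw [hudef, ZMod.coe_unitOfCoprime]; push_cast; ring
  set d := orderOf u with hd
  have hd0 : 0 < d := orderOf_pos u
  have h1 : (2 : ZMod n)^d = 1 := by
    have h := pow_orderOf_eq_one u
    have h' : ((u ^ d : (ZMod n)ˣ) : ZMod n) = ((1 : (ZMod n)ˣ) : ZMod n) := by rw [h]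
    rw [Units.val_pow_eq_pow_val, hu, Units.val_one] at h'
    exact h'
  have hdvd : (n:ℤ) ∣ 2^d - 1 := by
    rw [← ZMod.intCast_zmod_eq_zero_iff_dvd]
    push_cast
    rw [h1]; ring
  -- d is even
  have h3d : (3:ℤ) ∣ 2^d - 1 := dvd_trans (by exact_mod_cast dvd_pow_self 3 (Nat.succ_ne_zero k) : (3:ℤ) ∣ (n:ℤ)) hdvd
  have hdeven : d % 2 = 0 := by
    by_contra hodd
    have hodd' : Odd d := Nat.odd_iff.mpr (by omega)
    have := neg_one_pow_dvd d
    rw [hodd'.neg_one_pow] at this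
    -- 3 ∣ 2^d + 1 and 3 ∣ 2^d - 1
    have h2 : (3:ℤ) ∣ 2 := by
      have := dvd_sub this h3d
      simpa using this
    norm_num at h2
  obtain ⟨e, he⟩ : ∃ e, d = 2*e := ⟨d/2, by omega⟩
  have he0 : 0 < e := by omega
  have hsq : (n:ℤ) ∣ (2^e - 1) * (2^e + 1) := by
    have h2d : (2:ℤ)^d = (2^e)^2 := by rw [he, mul_comm, pow_mul]
    have heq : ((2:ℤ)^e - 1) * (2^e + 1) = 2^d - 1 := by rw [h2d]; ring
    rw [heq]; exact hdvd
  by_cases h3a : (3:ℤ) ∣ 2^e - 1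
  · exfalso
    -- then n ∣ 2^e - 1, contradicting minimality of d
    have h3b : ¬ (3:ℤ) ∣ 2^e + 1 := by
      intro hb
      have hd2 := dvd_sub hb h3a
      have : (3:ℤ) ∣ 2 := by simpa using hd2
      norm_num at this
    have hcop' : IsCoprime ((n:ℤ)) (2^e + 1) := by
      have h' : IsCoprime ((3:ℤ)^(k+1)) (2^e + 1) :=
        IsCoprime.pow_left ((Int.prime_three.coprime_iff_not_dvd).mpr h3b)
      have hcast : ((n:ℕ):ℤ) = (3:ℤ)^(k+1) := by rw [hn]; push_cast; ring
      rwa [hcast]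
    have hne : (n:ℤ) ∣ 2^e - 1 := hcop'.dvd_of_dvd_mul_right hsq
    have h1e : (2 : ZMod n)^e = 1 := by
      have : ((2^e - 1 : ℤ) : ZMod n) = 0 := (ZMod.intCast_zmod_eq_zero_iff_dvd _ _).mpr hne
      push_cast at this
      linear_combination this
    have hue : u ^ e = 1 := by
      apply Units.ext
      rw [Units.val_pow_eq_pow_val, hu, Units.val_one]
      exact h1e
    have := orderOf_dvd_of_pow_eq_one hue
    rw [← hd] at this
    have := Nat.le_of_dvd he0 this
    omega
  · have h3b : IsCoprime ((n:ℤ)) (2^e - 1) := by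
      have h' : IsCoprime ((3:ℤ)^(k+1)) (2^e - 1) :=
        IsCoprime.pow_left ((Int.prime_three.coprime_iff_not_dvd).mpr h3a)
      have hcast : ((n:ℕ):ℤ) = (3:ℤ)^(k+1) := by rw [hn]; push_cast; ring
      rwa [hcast]
    have := h3b.dvd_of_dvd_mul_left hsq
    exact ⟨e, by rw [hn] at this; push_cast at this ⊢; exact this⟩

/- group lemmas -/

private lemma myIsConj_inv {G : Type*} [Group G] {a b : G} (h : IsConj a b) : IsConj a⁻¹ b⁻¹ := by
  obtain ⟨c, hc⟩ := isConj_iff.mp h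
  exact isConj_iff.mpr ⟨c, by rw [← hc]; group⟩

private lemma myIsConj_zpow {G : Type*} [Group G] {a b : G} (h : IsConj a b) (n : ℤ) :
    IsConj (a^n) (b^n) := by
  obtain ⟨c, hc⟩ := isConj_iff.mp h
  exact isConj_iff.mpr ⟨c, by rw [← hc, conj_zpow]⟩

private lemma two_pow_conj {G : Type*} [Group G] (h : ∀ x : G, IsConj (x ^ (2:ℕ)) x⁻¹)
    (x : G) : ∀ m : ℕ, IsConj (x ^ ((2:ℤ)^m)) x ∨ IsConj (x ^ ((2:ℤ)^m)) x⁻¹ := by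
  intro m
  induction m with
  | zero => left; rw [pow_zero, zpow_one]
  | succ m ih =>
    have key : IsConj (x ^ ((2:ℤ)^(m+1))) ((x ^ ((2:ℤ)^m))⁻¹) := by
      have h2 := h (x ^ ((2:ℤ)^m))
      have : x ^ ((2:ℤ)^(m+1)) = (x ^ ((2:ℤ)^m)) ^ (2:ℕ) := by
        rw [pow_succ, zpow_mul]
        norm_cast
      rw [this]
      exact h2
    rcases ih with h1|h1
    · exact Or.inr (key.trans (myIsConj_inv h1))
    · refine Or.inl (key.trans ?_)
      have := myIsConj_inv h1
      rwa [inv_inv] at this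

private lemma two_pow_conj' {G : Type*} [Group G] {x : G} (h : IsConj (x ^ (2:ℕ)) x) :
    ∀ m : ℕ, IsConj (x ^ ((2:ℤ)^m)) x := by
  intro m
  induction m with
  | zero => rw [pow_zero, zpow_one]
  | succ m ih =>
    have h1 : x ^ ((2:ℤ)^(m+1)) = (x ^ ((2:ℤ)^m)) ^ (2:ℤ) := by
      rw [pow_succ, zpow_mul]
    rw [h1]
    have h2 := myIsConj_zpow ih 2
    refine h2.trans ?_
    have : x ^ (2:ℤ) = x ^ (2:ℕ) := by norm_cast
    rw [this]
    exact h

private lemma order_pow {G : Type*} [Group G] (h3 : IsPGroup 3 G) (x : G) :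
    ∃ k : ℕ, orderOf x = 3^k := by
  obtain ⟨k, hk⟩ := h3 x
  have hord : orderOf x ∣ 3^k := orderOf_dvd_of_pow_eq_one hk
  obtain ⟨k', _, h⟩ := (Nat.dvd_prime_pow (by norm_num : Nat.Prime 3)).mp hord
  exact ⟨k', h⟩

theorem stmt_8 {G : Type*} [Group G] [Finite G] (h3 : IsPGroup 3 G) :
    IsCutGroup G ↔ ∀ x : G, IsConj (x ^ (2 : ℕ)) x⁻¹ := by
  constructor
  · intro h x
    obtain ⟨k, hk⟩ := order_pow h3 x
    rcases Nat.eq_zero_or_pos k with rfl|hkpos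
    · have hx1 : x = 1 := orderOf_eq_one_iff.mp (by simpa using hk)
      subst hx1; simp
    · obtain ⟨l, rfl⟩ : ∃ l, k = l + 1 := ⟨k - 1, by omega⟩
      have hgcd : Int.gcd 2 (orderOf x) = 1 := by
        rw [hk]
        have h' : Nat.Coprime 2 (3^(l+1)) := Nat.Coprime.pow_right _ (by decide)
        exact h'
      have hcast : x ^ (2:ℤ) = x ^ (2:ℕ) := by norm_cast
      rcases h x 2 hgcd with h1|h1
      · rw [hcast] at h1
        -- x^2 ~ x; derive x ~ x⁻¹
        obtain ⟨m, hm⟩ := lemC l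
        have hxm : x ^ ((2:ℤ)^m) = x⁻¹ := by
          have hdvd : (orderOf x : ℤ) ∣ (2:ℤ)^m + 1 := by
            rw [hk]; push_cast; exact_mod_cast hm
          have h0 : x ^ ((2:ℤ)^m + 1) = 1 := (orderOf_dvd_iff_zpow_eq_one).mp hdvd
          rw [zpow_add, zpow_one] at h0
          exact eq_inv_of_mul_eq_one_left h0
        have := two_pow_conj' h1 m
        rw [hxm] at this
        exact h1.trans this.symm
      · rwa [hcast] at h1
  · intro h x j hgcd
    obtain ⟨k, hk⟩ := order_pow h3 x
    rcases Nat.eq_zero_or_pos k with rfl|hkpos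
    · have hx1 : x = 1 := orderOf_eq_one_iff.mp (by simpa using hk)
      subst hx1; left; simp
    · obtain ⟨l, rfl⟩ : ∃ l, k = l + 1 := ⟨k - 1, by omega⟩
      have h3j : ¬ (3:ℤ) ∣ j := by
        intro hdj
        have h1 : (3:ℕ) ∣ j.natAbs := by
          have := Int.natAbs_dvd_natAbs.mpr hdj
          simpa using this
        have h2 : (3:ℕ) ∣ (orderOf x : ℤ).natAbs := by
          rw [Int.natAbs_natCast, hk]
          exact dvd_pow_self 3 (Nat.succ_ne_zero l)
        have := Nat.dvd_gcd h1 h2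
        rw [Int.gcd] at hgcd
        omega
      obtain ⟨m, ε, hε, hdvd⟩ := lemA l j h3j
      have hx : x ^ j = x ^ (ε * 2^m) := by
        have hdvd' : (orderOf x : ℤ) ∣ j - ε * 2^m := by
          rw [hk]; push_cast; exact_mod_cast hdvd
        have h0 : x ^ (j - ε * 2^m) = 1 := (orderOf_dvd_iff_zpow_eq_one).mp hdvd'
        rw [zpow_sub] at h0
        have := mul_inv_eq_one.mp h0
        exact this
      rcases two_pow_conj h x m with hc|hc <;> rcases hε with rfl|rfl
      · left; rw [hx, one_mul]; exact hc
      · right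
        rw [hx, neg_one_mul, zpow_neg]
        exact myIsConj_inv hc
      · right; rw [hx, one_mul]; exact hc
      · left
        rw [hx, neg_one_mul, zpow_neg]
        have := myIsConj_inv hc
        rwa [inv_inv] at this
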